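/- arXiv:1503.08998 — 3 statements merged into one kernel-verified Lean document; each statement's English description precedes it below -/
import Mathlib

section
/- For all x, y ∈ {1, …, L}, the anticommutator ã_x† a_y + a_y ã_x† equals δ_{x,y}·id (the operators ã_x form a dual system to the operators a_x). -/
noncomputable section

/-- `w_x = sin(δ/2)` for odd `x`, `cos(δ/2)` for even `x`. -/
def wR (δ : ℝ) (x : ℕ) : ℝ := if Odd x then Real.sin (δ/2) else Real.cos (δ/2)

variable {V : Type*} [AddCommGroup V] [Module ℂ V]

/-- `a_x = w_{x+1} c_x − w_x c_{x+1}` for `1 ≤ x ≤ L−1`, and `a_L = w_2 c_1 + w_{L−1} c_L`. -/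
def aOp (L : ℕ) (δ : ℝ) (c : ℕ → Module.End ℂ V) (x : ℕ) : Module.End ℂ V :=
  if x = L then (wR δ 2 : ℂ) • c 1 + (wR δ (L-1) : ℂ) • c L
  else (wR δ (x+1) : ℂ) • c x - (wR δ x : ℂ) • c (x+1)

/-- `ã_x = (1/sin δ)(Σ_{y=1}^{x} w_y c_y − Σ_{y=x+1}^{L} w_y c_y)` for `1 ≤ x ≤ L−1`,
and `ã_L = (1/sin δ) Σ_{y=1}^{L} w_y c_y`. -/
def taOp (L : ℕ) (δ : ℝ) (c : ℕ → Module.End ℂ V) (x : ℕ) : Module.End ℂ V :=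
  if x = L then ((Real.sin δ : ℂ))⁻¹ • ∑ y ∈ Finset.Icc 1 L, (wR δ y : ℂ) • c y
  else ((Real.sin δ : ℂ))⁻¹ •
    (∑ y ∈ Finset.Icc 1 x, (wR δ y : ℂ) • c y - ∑ y ∈ Finset.Icc (x+1) L, (wR δ y : ℂ) • c y)

namespace Statement0Aux

lemma wR_mul_succ (δ : ℝ) (y : ℕ) :
    wR δ y * wR δ (y + 1) = Real.sin (δ/2) * Real.cos (δ/2) := by
  rcases Nat.even_or_odd y with h | h
  · have h' : ¬ Odd y := by simpa [Nat.not_odd_iff_even] using h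
    simp [wR, Nat.odd_add_one, h, h', mul_comm]
  · have h' : ¬ Even y := by simpa [Nat.not_even_iff_odd] using h
    simp [wR, Nat.odd_add_one, h, h']

/-- the scalar value of the anticommutator `{cdag u, a_y}`. -/
def gA (L : ℕ) (δ : ℝ) (u y : ℕ) : ℂ :=
  if y = L then (if u = 1 then (wR δ 2 : ℂ) else 0) + (if u = L then (wR δ (L-1) : ℂ) else 0)
  else (if u = y then (wR δ (y+1) : ℂ) else 0) - (if u = y+1 then (wR δ y : ℂ) else 0)

lemma ac_cdag_a (L : ℕ) (hL3 : 3 ≤ L) (δ : ℝ) (c cdag : ℕ → Module.End ℂ V)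
    (car_dc : ∀ x ∈ Finset.Icc 1 L, ∀ y ∈ Finset.Icc 1 L,
      cdag x * c y + c y * cdag x = if x = y then 1 else 0)
    (u : ℕ) (hu : u ∈ Finset.Icc 1 L) (y : ℕ) (hy : y ∈ Finset.Icc 1 L) :
    cdag u * aOp L δ c y + aOp L δ c y * cdag u = gA L δ u y • 1 := by
  rw [Finset.mem_Icc] at hy
  have h1L : (1:ℕ) ∈ Finset.Icc 1 L := by rw [Finset.mem_Icc]; omega
  have hLL : L ∈ Finset.Icc 1 L := by rw [Finset.mem_Icc]; omega
  by_cases hyL : y = L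
  · have e1 := car_dc u hu 1 h1L
    have e2 := car_dc u hu L hLL
    rw [hyL]
    simp only [aOp, gA, if_pos rfl, if_true]
    have expand : cdag u * ((wR δ 2:ℂ) • c 1 + (wR δ (L-1):ℂ) • c L)
        + ((wR δ 2:ℂ) • c 1 + (wR δ (L-1):ℂ) • c L) * cdag u
        = (wR δ 2:ℂ) • (cdag u * c 1 + c 1 * cdag u)
          + (wR δ (L-1):ℂ) • (cdag u * c L + c L * cdag u) := by
      simp only [mul_add, add_mul, mul_smul_comm, smul_mul_assoc, smul_add]; abel
    rw [expand, e1, e2]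
    split_ifs <;> simp [add_smul]
  · have hy1 : y + 1 ∈ Finset.Icc 1 L := by rw [Finset.mem_Icc]; omega
    have hyI : y ∈ Finset.Icc 1 L := by rw [Finset.mem_Icc]; omega
    have e1 := car_dc u hu y hyI
    have e2 := car_dc u hu (y+1) hy1
    simp only [aOp, gA, if_neg hyL]
    have expand : cdag u * ((wR δ (y+1):ℂ) • c y - (wR δ y:ℂ) • c (y+1))
        + ((wR δ (y+1):ℂ) • c y - (wR δ y:ℂ) • c (y+1)) * cdag u
        = (wR δ (y+1):ℂ) • (cdag u * c y + c y * cdag u)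
          - (wR δ y:ℂ) • (cdag u * c (y+1) + c (y+1) * cdag u) := by
      simp only [mul_sub, sub_mul, mul_smul_comm, smul_mul_assoc, smul_sub, smul_add]; abel
    rw [expand, e1, e2]
    split_ifs <;> first | (exfalso; omega) | simp [sub_smul]

lemma expand_smul_sum (s : ℂ) (S : Finset ℕ) (f : ℕ → ℂ) (A : ℕ → Module.End ℂ V)
    (B : Module.End ℂ V) (g : ℕ → ℂ)
    (h : ∀ u ∈ S, A u * B + B * A u = g u • 1) :
    (s • ∑ u ∈ S, f u • A u) * B + B * (s • ∑ u ∈ S, f u • A u)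
      = (s * ∑ u ∈ S, f u * g u) • 1 := by
  have h1 : (∑ u ∈ S, f u • A u) * B + B * (∑ u ∈ S, f u • A u)
      = ∑ u ∈ S, f u • (A u * B + B * A u) := by
    simp [Finset.sum_mul, Finset.mul_sum, smul_mul_assoc, mul_smul_comm,
      ← Finset.sum_add_distrib, smul_add]
  rw [smul_mul_assoc, mul_smul_comm, ← smul_add, h1,
    Finset.sum_congr rfl fun u hu => by rw [h u hu, smul_smul],
    ← Finset.sum_smul, smul_smul]

lemma expand_smul_sub (s : ℂ) (S T : Finset ℕ) (f : ℕ → ℂ) (A : ℕ → Module.End ℂ V)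
    (B : Module.End ℂ V) (g : ℕ → ℂ)
    (hS : ∀ u ∈ S, A u * B + B * A u = g u • 1)
    (hT : ∀ u ∈ T, A u * B + B * A u = g u • 1) :
    (s • (∑ u ∈ S, f u • A u - ∑ u ∈ T, f u • A u)) * B
      + B * (s • (∑ u ∈ S, f u • A u - ∑ u ∈ T, f u • A u))
      = (s * (∑ u ∈ S, f u * g u) - s * (∑ u ∈ T, f u * g u)) • 1 := by
  have hstep : (s • (∑ u ∈ S, f u • A u - ∑ u ∈ T, f u • A u)) * B
      + B * (s • (∑ u ∈ S, f u • A u - ∑ u ∈ T, f u • A u))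
      = ((s • ∑ u ∈ S, f u • A u) * B + B * (s • ∑ u ∈ S, f u • A u))
        - ((s • ∑ u ∈ T, f u • A u) * B + B * (s • ∑ u ∈ T, f u • A u)) := by
    simp only [smul_sub, sub_mul, mul_sub]; abel
  rw [hstep, expand_smul_sum s S f A B g hS, expand_smul_sum s T f A B g hT, ← sub_smul]

lemma sum_fg_ne (L : ℕ) (δ : ℝ) (y : ℕ) (hy : y ≠ L) (S : Finset ℕ) :
    ∑ u ∈ S, (wR δ u : ℂ) * gA L δ u y
      = (if y ∈ S then (wR δ y : ℂ) * (wR δ (y+1)) else 0)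
        - (if y+1 ∈ S then (wR δ (y+1) : ℂ) * (wR δ y) else 0) := by
  simp [gA, hy, mul_sub, mul_ite, mul_zero, Finset.sum_sub_distrib]

lemma sum_fg_L (L : ℕ) (hL3 : 3 ≤ L) (δ : ℝ) (S : Finset ℕ) :
    ∑ u ∈ S, (wR δ u : ℂ) * gA L δ u L
      = (if 1 ∈ S then (wR δ 1 : ℂ) * (wR δ 2) else 0)
        + (if L ∈ S then (wR δ L : ℂ) * (wR δ (L-1)) else 0) := by
  simp [gA, mul_add, mul_ite, mul_zero, Finset.sum_add_distrib]

end Statement0Aux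

open Statement0Aux in
/-- for all `x, y ∈ {1, …, L}`, the anticommutator
`ã_x† a_y + a_y ã_x†` equals `δ_{x,y} · id`. -/
theorem statement0 (L : ℕ) (hL3 : 3 ≤ L) (hLodd : Odd L)
    (δ : ℝ) (hδ0 : 0 < δ) (hδ1 : δ ≤ Real.pi / 2)
    (c cdag : ℕ → Module.End ℂ V)
    (car_cc : ∀ x ∈ Finset.Icc 1 L, ∀ y ∈ Finset.Icc 1 L, c x * c y + c y * c x = 0)
    (car_dd : ∀ x ∈ Finset.Icc 1 L, ∀ y ∈ Finset.Icc 1 L,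
      cdag x * cdag y + cdag y * cdag x = 0)
    (car_dc : ∀ x ∈ Finset.Icc 1 L, ∀ y ∈ Finset.Icc 1 L,
      cdag x * c y + c y * cdag x = if x = y then 1 else 0) :
    ∀ x ∈ Finset.Icc 1 L, ∀ y ∈ Finset.Icc 1 L,
      taOp L δ cdag x * aOp L δ c y + aOp L δ c y * taOp L δ cdag x
        = if x = y then 1 else 0 := by
  intro x hx y hy
  have hxm := Finset.mem_Icc.mp hx
  have hym := Finset.mem_Icc.mp hy
  have hδπ : δ < Real.pi := lt_of_le_of_lt hδ1 (by linarith [Real.pi_pos])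
  have hs0 : Real.sin δ ≠ 0 := ne_of_gt (Real.sin_pos_of_pos_of_lt_pi hδ0 hδπ)
  have hsin : Real.sin δ = 2 * (Real.sin (δ/2) * Real.cos (δ/2)) := by
    rw [show δ = 2 * (δ/2) by ring, Real.sin_two_mul]; ring_nf
  have hkey : ∀ z : ℕ, 2 * ((wR δ z : ℂ) * (wR δ (z+1) : ℂ)) = (Real.sin δ : ℂ) := by
    intro z
    rw [← Complex.ofReal_mul, wR_mul_succ, hsin]; push_cast; ring
  have hsC : ((Real.sin δ : ℂ)) ≠ 0 := by exact_mod_cast hs0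
  have core : ∀ u ∈ Finset.Icc 1 L,
      cdag u * aOp L δ c y + aOp L δ c y * cdag u = gA L δ u y • 1 :=
    fun u hu => ac_cdag_a L hL3 δ c cdag car_dc u hu y hy
  have hwL : (wR δ L : ℂ) = wR δ 1 := by
    simp [wR, hLodd]
  have hLevn : ¬ Odd (L - 1) := by
    rw [Nat.not_odd_iff_even]
    exact Nat.Odd.sub_odd hLodd odd_one
  have hwL1 : (wR δ (L-1) : ℂ) = wR δ 2 := by
    have : wR δ (L-1) = wR δ 2 := by
      rw [wR, wR, if_neg hLevn, if_neg (by decide : ¬ Odd 2)]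
    exact_mod_cast this
  by_cases hxL : x = L
  · rw [hxL, taOp, if_pos rfl,
      expand_smul_sum _ _ _ _ _ _ (fun u hu => core u hu)]
    by_cases hyL : y = L
    · rw [hyL, sum_fg_L L hL3 δ]
      have h1 : (1:ℕ) ∈ Finset.Icc 1 L := by rw [Finset.mem_Icc]; omega
      have h2 : L ∈ Finset.Icc 1 L := by rw [Finset.mem_Icc]; omega
      rw [if_pos h1, if_pos h2, if_pos rfl, hwL, hwL1]
      have : (Real.sin δ : ℂ)⁻¹ * ((wR δ 1 : ℂ) * (wR δ 2) + (wR δ 1 : ℂ) * (wR δ 2)) = 1 := by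
        have := hkey 1
        rw [show ((wR δ 1 : ℂ) * (wR δ 2) + (wR δ 1 : ℂ) * (wR δ 2))
          = 2 * ((wR δ 1 : ℂ) * (wR δ (1+1))) by ring, this, inv_mul_cancel₀ hsC]
      rw [this, one_smul]
    · rw [sum_fg_ne L δ y hyL]
      have h1 : y ∈ Finset.Icc 1 L := hy
      have h2 : y + 1 ∈ Finset.Icc 1 L := by rw [Finset.mem_Icc]; omega
      rw [if_pos h1, if_pos h2, if_neg (fun h => hyL h.symm)]
      rw [show (Real.sin δ:ℂ)⁻¹ * ((wR δ y : ℂ) * (wR δ (y+1))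
        - (wR δ (y+1) : ℂ) * (wR δ y)) = 0 by ring, zero_smul]
  · rw [taOp, if_neg hxL,
      expand_smul_sub _ _ _ _ _ _ _ (fun u hu => core u (by
        rw [Finset.mem_Icc] at *; omega)) (fun u hu => core u (by
        rw [Finset.mem_Icc] at *; omega))]
    by_cases hyL : y = L
    · rw [hyL, sum_fg_L L hL3 δ, sum_fg_L L hL3 δ]
      have h1 : (1:ℕ) ∈ Finset.Icc 1 x := by rw [Finset.mem_Icc]; omega
      have h2 : L ∉ Finset.Icc 1 x := by rw [Finset.mem_Icc]; omega
      have h3 : (1:ℕ) ∉ Finset.Icc (x+1) L := by rw [Finset.mem_Icc]; omega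
      have h4 : L ∈ Finset.Icc (x+1) L := by rw [Finset.mem_Icc]; omega
      rw [if_pos h1, if_neg h2, if_neg h3, if_pos h4, if_neg hxL, hwL, hwL1]
      rw [show (Real.sin δ:ℂ)⁻¹ * ((wR δ 1:ℂ) * (wR δ 2) + 0)
        - (Real.sin δ:ℂ)⁻¹ * (0 + (wR δ 1:ℂ) * (wR δ 2)) = 0 by ring, zero_smul]
    · rw [sum_fg_ne L δ y hyL, sum_fg_ne L δ y hyL]
      rcases lt_trichotomy x y with h | h | h
      · have h1 : y ∉ Finset.Icc 1 x := by rw [Finset.mem_Icc]; omega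
        have h2 : y + 1 ∉ Finset.Icc 1 x := by rw [Finset.mem_Icc]; omega
        have h3 : y ∈ Finset.Icc (x+1) L := by rw [Finset.mem_Icc]; omega
        have h4 : y + 1 ∈ Finset.Icc (x+1) L := by rw [Finset.mem_Icc]; omega
        rw [if_neg h1, if_neg h2, if_pos h3, if_pos h4, if_neg (by omega : ¬ x = y)]
        rw [show (Real.sin δ:ℂ)⁻¹ * ((0:ℂ) - 0)
          - (Real.sin δ:ℂ)⁻¹ * ((wR δ y:ℂ) * (wR δ (y+1)) - (wR δ (y+1):ℂ) * (wR δ y))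
          = 0 by ring, zero_smul]
      · subst h
        have h1 : x ∈ Finset.Icc 1 x := by rw [Finset.mem_Icc]; omega
        have h2 : x + 1 ∉ Finset.Icc 1 x := by rw [Finset.mem_Icc]; omega
        have h3 : x ∉ Finset.Icc (x+1) L := by rw [Finset.mem_Icc]; omega
        have h4 : x + 1 ∈ Finset.Icc (x+1) L := by rw [Finset.mem_Icc]; omega
        rw [if_pos h1, if_neg h2, if_neg h3, if_pos h4, if_pos rfl]
        have := hkey x
        rw [show (Real.sin δ:ℂ)⁻¹ * ((wR δ x:ℂ) * (wR δ (x+1)) - 0)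
          - (Real.sin δ:ℂ)⁻¹ * ((0:ℂ) - (wR δ (x+1):ℂ) * (wR δ x))
          = (Real.sin δ:ℂ)⁻¹ * (2 * ((wR δ x:ℂ) * (wR δ (x+1)))) by ring,
          this, inv_mul_cancel₀ hsC, one_smul]
      · have h1 : y ∈ Finset.Icc 1 x := by rw [Finset.mem_Icc]; omega
        have h2 : y + 1 ∈ Finset.Icc 1 x := by rw [Finset.mem_Icc]; omega
        have h3 : y ∉ Finset.Icc (x+1) L := by rw [Finset.mem_Icc]; omega
        have h4 : y + 1 ∉ Finset.Icc (x+1) L := by rw [Finset.mem_Icc]; omega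
        rw [if_pos h1, if_pos h2, if_neg h3, if_neg h4, if_neg (by omega : ¬ x = y)]
        rw [show (Real.sin δ:ℂ)⁻¹ * ((wR δ y:ℂ) * (wR δ (y+1)) - (wR δ (y+1):ℂ) * (wR δ y))
          - (Real.sin δ:ℂ)⁻¹ * ((0:ℂ) - 0) = 0 by ring, zero_smul]

end
end

section
/- For every x ∈ {1, …, L}, the commutator identity a_x ζ† − ζ† a_x = −2 b_x† holds. -/
/-!
With the partial sums `S_n = Σ_{y ≤ n} w_y c_y†`, every `ã_u†` equals `(2 S_u − S_L) / sin δ`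
(also for `u = L`). Since `w_x w_{x+1} = sin δ / 2`, the CAR then make `a_x` and `ã_u†`
biorthogonal: `{a_x, ã_u†} = δ_{ux}`. The identity `[A, BC] = {A, B} C − B {A, C}` turns
`[a_x, ζ†]` into `Σ_v (F_{xv} − F_{vx}) ã_v†`, a combination of two `ã†`'s in which the
partial sums telescope to `−2 b_x†`.
-/

noncomputable section

/-- The antisymmetric coefficient matrix `F_{x,y}`. -/
def Fc (L : ℕ) (δ : ℝ) (x y : ℕ) : ℂ :=
  if y = x + 1 ∨ (x = 1 ∧ y = L) then -(Real.sin δ) / 2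
  else if x = y + 1 ∨ (x = L ∧ y = 1) then (Real.sin δ) / 2
  else 0

variable {V : Type*} [AddCommGroup V] [Module ℂ V]

/-- `b_x = w_x c_x + w_{x+1} c_{x+1}` for `1 ≤ x ≤ L−1`, and `b_L = −w_1 c_1 + w_L c_L`. -/
def bOp (L : ℕ) (δ : ℝ) (c : ℕ → Module.End ℂ V) (x : ℕ) : Module.End ℂ V :=
  if x = L then (-(wR δ 1) : ℂ) • c 1 + (wR δ L : ℂ) • c L
  else (wR δ x : ℂ) • c x + (wR δ (x+1) : ℂ) • c (x+1)

/-- The pair operator `ζ† = Σ_{x,y=1}^{L} F_{x,y} ã_x† ã_y†`. -/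
def zetaDag (L : ℕ) (δ : ℝ) (cdag : ℕ → Module.End ℂ V) : Module.End ℂ V :=
  ∑ x ∈ Finset.Icc 1 L, ∑ y ∈ Finset.Icc 1 L,
    Fc L δ x y • (taOp L δ cdag x * taOp L δ cdag y)

section Anticommutators

variable {𝕜 R ι : Type*} [CommRing 𝕜] [Ring R] [Algebra 𝕜 R] [DecidableEq ι]

theorem mul_mul_sub_mul_mul (A B C : R) :
    A * (B * C) - B * C * A = (A * B + B * A) * C - B * (A * C + C * A) := by
  noncomm_ring

theorem anticomm_sum_smul (t : Finset ι) (f : ι → 𝕜) (A : R) (T : ι → R) (z : ι)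
    (h : ∀ y ∈ t, A * T y + T y * A = if y = z then 1 else 0) :
    A * (∑ y ∈ t, f y • T y) + (∑ y ∈ t, f y • T y) * A = (if z ∈ t then f z else 0) • 1 := by
  simp only [Finset.mul_sum, Finset.sum_mul, mul_smul_comm, smul_mul_assoc,
    ← Finset.sum_add_distrib, ← smul_add]
  rw [Finset.sum_congr rfl fun y hy => by rw [h y hy]]
  simp [Finset.sum_ite_eq', ite_smul]

theorem commutator_sum_smul_mul_of_anticomm (s : Finset ι) (F : ι → ι → 𝕜) (T : ι → R) (A : R)
    {x : ι} (hx : x ∈ s) (h : ∀ u ∈ s, A * T u + T u * A = if u = x then 1 else 0) :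
    A * (∑ u ∈ s, ∑ v ∈ s, F u v • (T u * T v)) - (∑ u ∈ s, ∑ v ∈ s, F u v • (T u * T v)) * A
      = ∑ v ∈ s, (F x v - F v x) • T v := by
  calc _ = ∑ u ∈ s, ∑ v ∈ s, F u v • (A * (T u * T v) - T u * T v * A) := by
        simp only [Finset.mul_sum, Finset.sum_mul, mul_smul_comm, smul_mul_assoc,
          ← Finset.sum_sub_distrib, smul_sub]
    _ = ∑ u ∈ s, ∑ v ∈ s, F u v • ((if u = x then T v else 0) - if v = x then T u else 0) := by
        refine Finset.sum_congr rfl fun u hu => Finset.sum_congr rfl fun v hv => ?_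
        rw [mul_mul_sub_mul_mul, h u hu, h v hv]
        simp [ite_mul, mul_ite]
    _ = _ := by
        simp [smul_sub, Finset.sum_sub_distrib, smul_ite, Finset.sum_ite_eq', hx, sub_smul]

end Anticommutators

theorem wR_mul_wR_succ (δ : ℝ) (x : ℕ) : wR δ x * wR δ (x + 1) = Real.sin δ / 2 := by
  have h : Real.sin δ = 2 * Real.sin (δ / 2) * Real.cos (δ / 2) := by
    rw [← Real.sin_two_mul]; ring_nf
  rcases Nat.even_or_odd x with hx | hx
  · simp [wR, ← Nat.not_even_iff_odd, hx, h]; ring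
  · simp [wR, Nat.odd_add_one, hx, h]; ring

def wSum (δ : ℝ) (d : ℕ → Module.End ℂ V) (n : ℕ) : Module.End ℂ V :=
  ∑ y ∈ Finset.Icc 1 n, (wR δ y : ℂ) • d y

theorem wSum_zero (δ : ℝ) (d : ℕ → Module.End ℂ V) : wSum δ d 0 = 0 := by
  simp [wSum]

theorem wSum_succ (δ : ℝ) (d : ℕ → Module.End ℂ V) (n : ℕ) :
    wSum δ d (n + 1) = wSum δ d n + (wR δ (n + 1) : ℂ) • d (n + 1) :=
  Finset.sum_Icc_succ_top (by omega) _

theorem taOp_eq_wSum (L : ℕ) (δ : ℝ) (d : ℕ → Module.End ℂ V) {u : ℕ} (hu : u ≤ L) :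
    taOp L δ d u = (Real.sin δ : ℂ)⁻¹ • ((2 : ℂ) • wSum δ d u - wSum δ d L) := by
  unfold taOp
  split_ifs with h
  · subst h; unfold wSum; module
  · have hsplit : wSum δ d L = wSum δ d u + ∑ y ∈ Finset.Icc (u + 1) L, (wR δ y : ℂ) • d y := by
      unfold wSum
      rw [← Finset.sum_union]
      · congr 1; ext t; simp; omega
      · rw [Finset.disjoint_left]; intro t; simp; omega
    rw [hsplit]; unfold wSum; module

theorem sin_smul_taOp {L : ℕ} {δ : ℝ} (hs : Real.sin δ ≠ 0) (d : ℕ → Module.End ℂ V) {u : ℕ}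
    (hu : u ≤ L) : (Real.sin δ : ℂ) • taOp L δ d u = (2 : ℂ) • wSum δ d u - wSum δ d L := by
  rw [taOp_eq_wSum L δ d hu, smul_inv_smul₀ (by exact_mod_cast hs)]

theorem anticomm_c_wSum {L : ℕ} {δ : ℝ} {c d : ℕ → Module.End ℂ V}
    (car : ∀ x ∈ Finset.Icc 1 L, ∀ y ∈ Finset.Icc 1 L,
      d x * c y + c y * d x = if x = y then 1 else 0)
    {z n : ℕ} (hz : z ∈ Finset.Icc 1 L) (hn : n ≤ L) :
    c z * wSum δ d n + wSum δ d n * c z = (if z ≤ n then (wR δ z : ℂ) else 0) • 1 := by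
  rw [wSum, anticomm_sum_smul (z := z)]
  · simp [Finset.mem_Icc, (Finset.mem_Icc.mp hz).1]
  · intro y hy
    rw [add_comm, car y (Finset.Icc_subset_Icc_right hn hy) z hz]

theorem anticomm_c_taOp {L : ℕ} {δ : ℝ} {c d : ℕ → Module.End ℂ V}
    (car : ∀ x ∈ Finset.Icc 1 L, ∀ y ∈ Finset.Icc 1 L,
      d x * c y + c y * d x = if x = y then 1 else 0)
    {z u : ℕ} (hz : z ∈ Finset.Icc 1 L) (hu : u ≤ L) :
    c z * taOp L δ d u + taOp L δ d u * c z
      = ((Real.sin δ : ℂ)⁻¹ * (if z ≤ u then 1 else -1) * wR δ z) • 1 := by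
  have hS := anticomm_c_wSum (δ := δ) car hz hu
  have hT := anticomm_c_wSum (δ := δ) car hz le_rfl
  rw [if_pos (Finset.mem_Icc.mp hz).2] at hT
  rw [taOp_eq_wSum L δ d hu]
  calc _ = (Real.sin δ : ℂ)⁻¹ • ((2 : ℂ) • (c z * wSum δ d u + wSum δ d u * c z)
          - (c z * wSum δ d L + wSum δ d L * c z)) := by
        simp only [mul_smul_comm, smul_mul_assoc, mul_sub, sub_mul]; module
    _ = _ := by rw [hS, hT]; split_ifs <;> module

theorem anticomm_aOp_taOp {L : ℕ} {δ : ℝ} (hs : Real.sin δ ≠ 0) {c d : ℕ → Module.End ℂ V}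
    (car : ∀ x ∈ Finset.Icc 1 L, ∀ y ∈ Finset.Icc 1 L,
      d x * c y + c y * d x = if x = y then 1 else 0)
    {x u : ℕ} (hx : x ∈ Finset.Icc 1 L) (hu : u ∈ Finset.Icc 1 L) :
    aOp L δ c x * taOp L δ d u + taOp L δ d u * aOp L δ c x = if u = x then 1 else 0 := by
  have hsC : (Real.sin δ : ℂ) ≠ 0 := by exact_mod_cast hs
  have hw (y : ℕ) : (wR δ y : ℂ) * wR δ (y + 1) = Real.sin δ * 2⁻¹ := by
    rw [← div_eq_mul_inv]; exact_mod_cast wR_mul_wR_succ δ y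
  rw [Finset.mem_Icc] at hx hu
  have hmem {y : ℕ} (h1 : 1 ≤ y) (h2 : y ≤ L) : y ∈ Finset.Icc 1 L := Finset.mem_Icc.mpr ⟨h1, h2⟩
  rw [show (if u = x then 1 else 0 : Module.End ℂ V) = (if u = x then (1 : ℂ) else 0) • 1 by
    split_ifs <;> simp]
  by_cases hxL : x = L
  · have hL := hw (L - 1)
    rw [Nat.sub_add_cancel (by omega)] at hL
    calc _ = (wR δ 2 : ℂ) • (c 1 * taOp L δ d u + taOp L δ d u * c 1)
          + (wR δ (L - 1) : ℂ) • (c L * taOp L δ d u + taOp L δ d u * c L) := by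
          rw [aOp, if_pos hxL]
          simp only [add_mul, mul_add, smul_mul_assoc, mul_smul_comm]; module
      _ = ((Real.sin δ : ℂ)⁻¹ * (wR δ 1 * wR δ 2)
            + (Real.sin δ : ℂ)⁻¹ * (wR δ (L - 1) * wR δ L) * (if L ≤ u then 1 else -1) : ℂ)
            • 1 := by
        rw [anticomm_c_taOp car (hmem le_rfl (by omega)) hu.2,
          anticomm_c_taOp car (hmem (by omega) le_rfl) hu.2, smul_smul, smul_smul, ← add_smul,
          if_pos hu.1]
        congr 1; ring
      _ = _ := by
        rw [hw 1, hL, inv_mul_cancel_left₀ hsC]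
        split_ifs <;> first | omega | norm_num
  · calc _ = (wR δ (x + 1) : ℂ) • (c x * taOp L δ d u + taOp L δ d u * c x)
          - (wR δ x : ℂ) • (c (x + 1) * taOp L δ d u + taOp L δ d u * c (x + 1)) := by
          rw [aOp, if_neg hxL]
          simp only [sub_mul, mul_sub, smul_mul_assoc, mul_smul_comm]; module
      _ = ((Real.sin δ : ℂ)⁻¹ * (wR δ x * wR δ (x + 1))
            * ((if x ≤ u then 1 else -1) - if x + 1 ≤ u then 1 else -1) : ℂ) • 1 := by
        rw [anticomm_c_taOp car (hmem hx.1 hx.2) hu.2,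
          anticomm_c_taOp car (hmem (by omega) (by omega)) hu.2, smul_smul, smul_smul, ← sub_smul]
        congr 1; ring
      _ = _ := by
        rw [hw x, inv_mul_cancel_left₀ hsC]
        split_ifs <;> first | omega | norm_num

theorem Fc_sub_Fc {L : ℕ} (hL : 3 ≤ L) (δ : ℝ) (x v : ℕ) :
    Fc L δ x v - Fc L δ v x = if v = x + 1 ∨ (x = 1 ∧ v = L) then -(Real.sin δ : ℂ)
      else if x = v + 1 ∨ (x = L ∧ v = 1) then (Real.sin δ : ℂ) else 0 := by
  unfold Fc
  split_ifs <;> first | omega | ring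

theorem sum_Fc_sub_smul_taOp {L : ℕ} (hL : 3 ≤ L) {δ : ℝ} (hs : Real.sin δ ≠ 0)
    (d : ℕ → Module.End ℂ V) {x : ℕ} (hx : x ∈ Finset.Icc 1 L) :
    ∑ v ∈ Finset.Icc 1 L, (Fc L δ x v - Fc L δ v x) • taOp L δ d v = (-2 : ℂ) • bOp L δ d x := by
  have hmem {y : ℕ} (h1 : 1 ≤ y) (h2 : y ≤ L) : y ∈ Finset.Icc 1 L := Finset.mem_Icc.mpr ⟨h1, h2⟩
  have hoff {v : ℕ} (hne : ¬(v = x + 1 ∨ (x = 1 ∧ v = L)))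
      (hne' : ¬(x = v + 1 ∨ (x = L ∧ v = 1))) : (Fc L δ x v - Fc L δ v x) • taOp L δ d v = 0 := by
    rw [Fc_sub_Fc hL, if_neg hne, if_neg hne', zero_smul]
  rw [Finset.mem_Icc] at hx
  rcases (show x = 1 ∨ 1 < x ∧ x < L ∨ L = x by omega) with rfl | ⟨h1, h2⟩ | rfl
  · rw [Finset.sum_eq_add_of_mem 2 L (hmem (by omega) (by omega)) (hmem (by omega) le_rfl)
      (by omega) fun v hv hne => hoff (by omega) (by simp at hv; omega),
      Fc_sub_Fc hL, Fc_sub_Fc hL, if_pos (by omega), if_pos (by omega), neg_smul, neg_smul,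
      sin_smul_taOp hs d (by omega), sin_smul_taOp hs d le_rfl,
      bOp, if_neg (by omega), wSum_succ, wSum_succ, wSum_zero]
    module
  · obtain ⟨n, rfl⟩ : ∃ n, x = n + 1 := ⟨x - 1, by omega⟩
    rw [Finset.sum_eq_add_of_mem n (n + 2) (hmem (by omega) (by omega))
      (hmem (by omega) (by omega)) (by omega) fun v _ hne => hoff (by omega) (by omega),
      Fc_sub_Fc hL, Fc_sub_Fc hL, if_neg (by omega), if_pos (by omega), if_pos (by omega),
      neg_smul, sin_smul_taOp hs d (by omega), sin_smul_taOp hs d (by omega),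
      bOp, if_neg (by omega), wSum_succ δ d (n + 1), wSum_succ δ d n]
    module
  · obtain ⟨m, rfl⟩ : ∃ m, L = m + 1 := ⟨L - 1, by omega⟩
    rw [Finset.sum_eq_add_of_mem 1 m (hmem le_rfl (by omega)) (hmem (by omega) (by omega))
      (by omega) fun v hv hne => hoff (by simp at hv; omega) (by omega),
      Fc_sub_Fc hL, Fc_sub_Fc hL, if_neg (by omega), if_pos (by omega), if_neg (by omega),
      if_pos (by omega), sin_smul_taOp hs d (by omega), sin_smul_taOp hs d (by omega),
      bOp, if_pos rfl, wSum_succ δ d m, wSum_succ δ d 0, wSum_zero]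
    module

theorem statement6_general (L : ℕ) (hL3 : 3 ≤ L)
    (δ : ℝ) (hδ0 : 0 < δ) (hδ1 : δ ≤ Real.pi / 2)
    (c cdag : ℕ → Module.End ℂ V)
    (car_dc : ∀ x ∈ Finset.Icc 1 L, ∀ y ∈ Finset.Icc 1 L,
      cdag x * c y + c y * cdag x = if x = y then 1 else 0) :
    ∀ x ∈ Finset.Icc 1 L,
      aOp L δ c x * zetaDag L δ cdag - zetaDag L δ cdag * aOp L δ c x
        = (-2 : ℂ) • bOp L δ cdag x := by
  intro x hx
  have hs : Real.sin δ ≠ 0 :=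
    (Real.sin_pos_of_pos_of_lt_pi hδ0 (by linarith [Real.pi_pos])).ne'
  rw [zetaDag, commutator_sum_smul_mul_of_anticomm _ _ _ _ hx
    fun u hu => anticomm_aOp_taOp hs car_dc hx hu]
  exact sum_Fc_sub_smul_taOp hL3 hs cdag hx

/-- for every `x ∈ {1,…,L}`, `a_x ζ† − ζ† a_x = −2 b_x†`. -/
theorem statement6 (L : ℕ) (hL3 : 3 ≤ L) (hLodd : Odd L)
    (δ : ℝ) (hδ0 : 0 < δ) (hδ1 : δ ≤ Real.pi / 2)
    (c cdag : ℕ → Module.End ℂ V)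
    (car_cc : ∀ x ∈ Finset.Icc 1 L, ∀ y ∈ Finset.Icc 1 L, c x * c y + c y * c x = 0)
    (car_dd : ∀ x ∈ Finset.Icc 1 L, ∀ y ∈ Finset.Icc 1 L,
      cdag x * cdag y + cdag y * cdag x = 0)
    (car_dc : ∀ x ∈ Finset.Icc 1 L, ∀ y ∈ Finset.Icc 1 L,
      cdag x * c y + c y * cdag x = if x = y then 1 else 0) :
    ∀ x ∈ Finset.Icc 1 L,
      aOp L δ c x * zetaDag L δ cdag - zetaDag L δ cdag * aOp L δ c x
        = (-2 : ℂ) • bOp L δ cdag x :=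
  statement6_general L hL3 δ hδ0 hδ1 c cdag car_dc

end
end

section
/- For every integer Ne with 1 ≤ Ne ≤ L−1, the inequality Σ_{A ⊆ {1,…,L}, |A| = Ne} W_A ≤ (L(L−1)/(Ne(L−Ne))) cos²(δ/2) Σ_{A ⊆ {2,…,L−1}, |A| = Ne−1} W_A holds. -/
noncomputable section

/-- `W_A = Π_{x∈A} w_x²`. -/
def WA (δ : ℝ) (A : Finset ℕ) : ℝ := ∏ x ∈ A, (wR δ x)^2

open Finset

/-- Bijection: pairs (A,x) with x ∈ A, |A|=n, A ⊆ S  ↔  pairs (B,x), |B|=n-1, B ⊆ S, x ∈ S\B. -/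
lemma sum_erase_pairs (S : Finset ℕ) (n : ℕ) (hn : 1 ≤ n) (f : Finset ℕ → ℝ) :
    ∑ A ∈ S.powersetCard n, ∑ x ∈ A, f (A.erase x)
      = ∑ B ∈ S.powersetCard (n-1), ∑ x ∈ S \ B, f B := by
  rw [Finset.sum_sigma' (S.powersetCard n) (fun A => A) (fun A x => f (A.erase x)),
    Finset.sum_sigma' (S.powersetCard (n-1)) (fun B => S \ B) (fun B _ => f B)]
  refine Finset.sum_nbij' (fun p => (⟨p.1.erase p.2, p.2⟩ : Σ _ : Finset ℕ, ℕ))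
    (fun p => (⟨insert p.2 p.1, p.2⟩ : Σ _ : Finset ℕ, ℕ)) ?_ ?_ ?_ ?_ ?_
  · rintro ⟨A, x⟩ hp
    simp only [Finset.mem_sigma, Finset.mem_powersetCard] at hp ⊢
    obtain ⟨⟨hAS, hAc⟩, hx⟩ := hp
    refine ⟨⟨(Finset.erase_subset _ _).trans hAS, ?_⟩, ?_⟩
    · rw [Finset.card_erase_of_mem hx, hAc]
    · simp [Finset.mem_sdiff, hAS hx]
  · rintro ⟨B, x⟩ hp
    simp only [Finset.mem_sigma, Finset.mem_powersetCard, Finset.mem_sdiff] at hp ⊢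
    obtain ⟨⟨hBS, hBc⟩, hxS, hxB⟩ := hp
    refine ⟨⟨Finset.insert_subset hxS hBS, ?_⟩, Finset.mem_insert_self _ _⟩
    rw [Finset.card_insert_of_notMem hxB, hBc]
    omega
  · rintro ⟨A, x⟩ hp
    simp only [Finset.mem_sigma] at hp
    simp [Finset.insert_erase hp.2]
  · rintro ⟨B, x⟩ hp
    simp only [Finset.mem_sigma, Finset.mem_sdiff] at hp
    simp [Finset.erase_insert hp.2.2]
  · rintro ⟨A, x⟩ _; rfl

/-- Step 1: `n · Σ_{|A|=n} Π f ≤ C · (|S|−(n−1)) · Σ_{|B|=n−1} Π f` when `0 ≤ f ≤ C` on `S`. -/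
lemma step1 (S : Finset ℕ) (n : ℕ) (hn : 1 ≤ n) (f : ℕ → ℝ)
    (h0 : ∀ y, 0 ≤ f y) (C : ℝ) (hC0 : 0 ≤ C) (hC : ∀ x ∈ S, f x ≤ C) :
    (n : ℝ) * ∑ A ∈ S.powersetCard n, ∏ x ∈ A, f x
      ≤ C * ((S.card - (n-1) : ℕ) : ℝ) * ∑ B ∈ S.powersetCard (n-1), ∏ x ∈ B, f x := by
  have key : (n : ℝ) * ∑ A ∈ S.powersetCard n, ∏ x ∈ A, f x
      = ∑ A ∈ S.powersetCard n, ∑ x ∈ A, ∏ y ∈ A, f y := by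
    rw [Finset.mul_sum]
    refine Finset.sum_congr rfl fun A hA => ?_
    rw [Finset.sum_const, nsmul_eq_mul, (Finset.mem_powersetCard.mp hA).2]
  rw [key]
  have h2 : ∑ A ∈ S.powersetCard n, ∑ x ∈ A, ∏ y ∈ A, f y
      ≤ ∑ A ∈ S.powersetCard n, ∑ x ∈ A, C * ∏ y ∈ A.erase x, f y := by
    refine Finset.sum_le_sum fun A hA => Finset.sum_le_sum fun x hx => ?_
    rw [← Finset.mul_prod_erase A f hx]
    exact mul_le_mul_of_nonneg_right
      (hC x ((Finset.mem_powersetCard.mp hA).1 hx))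
      (Finset.prod_nonneg fun y _ => h0 y)
  refine h2.trans ?_
  have h3 : ∑ A ∈ S.powersetCard n, ∑ x ∈ A, C * ∏ y ∈ A.erase x, f y
      = C * ∑ B ∈ S.powersetCard (n-1), ∑ x ∈ S \ B, ∏ y ∈ B, f y := by
    rw [← sum_erase_pairs S n hn (fun B => ∏ y ∈ B, f y), Finset.mul_sum]
    exact Finset.sum_congr rfl fun A _ => by rw [Finset.mul_sum]
  rw [h3]
  have h4 : ∑ B ∈ S.powersetCard (n-1), ∑ x ∈ S \ B, ∏ y ∈ B, f y
      = ((S.card - (n-1) : ℕ) : ℝ) * ∑ B ∈ S.powersetCard (n-1), ∏ y ∈ B, f y := by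
    rw [Finset.mul_sum]
    refine Finset.sum_congr rfl fun B hB => ?_
    obtain ⟨hBS, hBc⟩ := Finset.mem_powersetCard.mp hB
    rw [Finset.sum_const, Finset.card_sdiff_of_subset hBS, hBc, nsmul_eq_mul]
  rw [h4, ← mul_assoc]

/-- Core bijection for step 2. -/
lemma sum_swap_pairs (U : Finset ℕ) (z : ℕ) (hz : z ∈ U) (k : ℕ) (f : Finset ℕ → ℝ) :
    ∑ B ∈ U.powersetCard k, ∑ y ∈ U \ B, f (if z ∈ B then insert y (B.erase z) else B)
      = ∑ B ∈ (U.erase z).powersetCard k, ∑ y ∈ U, f B := by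
  rw [Finset.sum_sigma' (U.powersetCard k) (fun B => U \ B)
      (fun B y => f (if z ∈ B then insert y (B.erase z) else B)),
    Finset.sum_sigma' ((U.erase z).powersetCard k) (fun _ => U) (fun B _ => f B)]
  refine Finset.sum_nbij'
    (fun p => (⟨if z ∈ p.1 then insert p.2 (p.1.erase z) else p.1, p.2⟩ : Σ _ : Finset ℕ, ℕ))
    (fun p => (⟨if p.2 ∈ p.1 then insert z (p.1.erase p.2) else p.1, p.2⟩ : Σ _ : Finset ℕ, ℕ))
    ?_ ?_ ?_ ?_ ?_
  · rintro ⟨B, y⟩ hp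
    simp only [Finset.mem_sigma, Finset.mem_powersetCard, Finset.mem_sdiff] at hp ⊢
    obtain ⟨⟨hBU, hBc⟩, hyU, hyB⟩ := hp
    by_cases hzB : z ∈ B
    · simp only [if_pos hzB]
      have hyz : y ≠ z := fun h => hyB (h ▸ hzB)
      constructor
      · constructor
        · intro a ha
          rcases Finset.mem_insert.mp ha with rfl | ha
          · exact Finset.mem_erase.mpr ⟨hyz, hyU⟩
          · exact Finset.mem_erase.mpr ⟨(Finset.mem_erase.mp ha).1,
              hBU (Finset.mem_erase.mp ha).2⟩
        · rw [Finset.card_insert_of_notMem (fun h => hyB (Finset.erase_subset _ _ h)),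
            Finset.card_erase_of_mem hzB, hBc]
          have hk : 1 ≤ k := hBc ▸ Finset.card_pos.mpr ⟨z, hzB⟩
          omega
      · exact hyU
    · simp only [if_neg hzB]
      refine ⟨⟨fun a ha => Finset.mem_erase.mpr ⟨fun h => hzB (h ▸ ha), hBU ha⟩, hBc⟩, hyU⟩
  · rintro ⟨B, y⟩ hp
    simp only [Finset.mem_sigma, Finset.mem_powersetCard, Finset.mem_sdiff] at hp ⊢
    obtain ⟨⟨hBU, hBc⟩, hyU⟩ := hp
    have hzB : z ∉ B := fun h => (Finset.mem_erase.mp (hBU h)).1 rfl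
    by_cases hyB : y ∈ B
    · simp only [if_pos hyB]
      have hyz : y ≠ z := fun h => hzB (h ▸ hyB)
      refine ⟨⟨Finset.insert_subset hz (fun a ha => Finset.erase_subset _ _
        (hBU (Finset.erase_subset _ _ ha))), ?_⟩, ?_⟩
      · rw [Finset.card_insert_of_notMem (fun h => hzB (Finset.erase_subset _ _ h)),
          Finset.card_erase_of_mem hyB, hBc]
        have hk : 1 ≤ k := hBc ▸ Finset.card_pos.mpr ⟨y, hyB⟩
        omega
      · simp only [Finset.mem_insert, Finset.mem_erase]
        push_neg
        exact ⟨hyU, fun h => absurd h hyz, fun h _ => (h rfl).elim⟩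
    · simp only [if_neg hyB]
      exact ⟨⟨fun a ha => Finset.erase_subset _ _ (hBU ha), hBc⟩, hyU, hyB⟩
  · rintro ⟨B, y⟩ hp
    simp only [Finset.mem_sigma, Finset.mem_powersetCard, Finset.mem_sdiff] at hp
    obtain ⟨⟨hBU, hBc⟩, hyU, hyB⟩ := hp
    by_cases hzB : z ∈ B
    · have hyz : y ≠ z := fun h => hyB (h ▸ hzB)
      simp only [if_pos hzB]
      have hy' : y ∈ insert y (B.erase z) := Finset.mem_insert_self _ _
      rw [if_pos hy']
      have : (insert y (B.erase z)).erase y = B.erase z := by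
        rw [Finset.erase_insert (by simp [hyB])]
      rw [this, Finset.insert_erase hzB]
    · simp only [if_neg hzB, if_neg hyB]
  · rintro ⟨B, y⟩ hp
    simp only [Finset.mem_sigma, Finset.mem_powersetCard, Finset.mem_sdiff] at hp
    obtain ⟨⟨hBU, hBc⟩, hyU⟩ := hp
    have hzB : z ∉ B := fun h => (Finset.mem_erase.mp (hBU h)).1 rfl
    by_cases hyB : y ∈ B
    · have hyz : y ≠ z := fun h => hzB (h ▸ hyB)
      simp only [if_pos hyB]
      have hz' : z ∈ insert z (B.erase y) := Finset.mem_insert_self _ _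
      rw [if_pos hz']
      have : (insert z (B.erase y)).erase z = B.erase y := by
        rw [Finset.erase_insert (by simp [hzB])]
      rw [this, Finset.insert_erase hyB]
    · simp only [if_neg hyB, if_neg hzB]
  · rintro ⟨B, y⟩ _; rfl

/-- Step 2: removing a minimal-weight element. -/
lemma step2 (U : Finset ℕ) (z : ℕ) (hz : z ∈ U) (f : ℕ → ℝ)
    (h0 : ∀ y, 0 ≤ f y) (hmin : ∀ y ∈ U, f z ≤ f y) (k : ℕ) :
    ((U.card - k : ℕ) : ℝ) * ∑ B ∈ U.powersetCard k, ∏ x ∈ B, f x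
      ≤ (U.card : ℝ) * ∑ B ∈ (U.erase z).powersetCard k, ∏ x ∈ B, f x := by
  have key : ((U.card - k : ℕ) : ℝ) * ∑ B ∈ U.powersetCard k, ∏ x ∈ B, f x
      = ∑ B ∈ U.powersetCard k, ∑ y ∈ U \ B, ∏ x ∈ B, f x := by
    rw [Finset.mul_sum]
    refine Finset.sum_congr rfl fun B hB => ?_
    obtain ⟨hBU, hBc⟩ := Finset.mem_powersetCard.mp hB
    rw [Finset.sum_const, Finset.card_sdiff_of_subset hBU, hBc, nsmul_eq_mul]
  rw [key]
  have h2 : ∑ B ∈ U.powersetCard k, ∑ y ∈ U \ B, ∏ x ∈ B, f x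
      ≤ ∑ B ∈ U.powersetCard k, ∑ y ∈ U \ B,
          ∏ x ∈ (if z ∈ B then insert y (B.erase z) else B), f x := by
    refine Finset.sum_le_sum fun B hB => Finset.sum_le_sum fun y hy => ?_
    obtain ⟨hBU, hBc⟩ := Finset.mem_powersetCard.mp hB
    obtain ⟨hyU, hyB⟩ := Finset.mem_sdiff.mp hy
    by_cases hzB : z ∈ B
    · rw [if_pos hzB, Finset.prod_insert (by simp [hyB]),
        ← Finset.mul_prod_erase B f hzB]
      exact mul_le_mul_of_nonneg_right (hmin y hyU)
        (Finset.prod_nonneg fun x _ => h0 x)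
    · rw [if_neg hzB]
  refine h2.trans ?_
  rw [sum_swap_pairs U z hz k (fun B => ∏ x ∈ B, f x)]
  rw [Finset.mul_sum]
  refine le_of_eq (Finset.sum_congr rfl fun B _ => ?_)
  rw [Finset.sum_const, nsmul_eq_mul]

/-- for `1 ≤ Ne ≤ L−1`,
`Σ_{A⊆{1,…,L}, |A|=Ne} W_A
  ≤ (L(L−1)/(Ne(L−Ne))) cos²(δ/2) Σ_{A⊆{2,…,L−1}, |A|=Ne−1} W_A`. -/
theorem statement17 (L : ℕ) (hL3 : 3 ≤ L) (hLodd : Odd L)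
    (δ : ℝ) (hδ0 : 0 < δ) (hδ1 : δ ≤ Real.pi / 2)
    (Ne : ℕ) (hNe1 : 1 ≤ Ne) (hNeL : Ne ≤ L - 1) :
    ∑ A ∈ (Finset.Icc 1 L).powersetCard Ne, WA δ A
      ≤ ((L : ℝ) * ((L : ℝ) - 1) / ((Ne : ℝ) * ((L : ℝ) - (Ne : ℝ))))
          * Real.cos (δ/2)^2
          * ∑ A ∈ (Finset.Icc 2 (L-1)).powersetCard (Ne-1), WA δ A := by
  simp only [WA]
  have hπ := Real.pi_pos
  set c := Real.cos (δ/2) with hcdef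
  set s := Real.sin (δ/2) with hsdef
  have hδ2a : 0 < δ/2 := by linarith
  have hs0 : 0 ≤ s := Real.sin_nonneg_of_nonneg_of_le_pi (le_of_lt hδ2a) (by linarith)
  have hsc : s ≤ c := by
    rw [hcdef, ← Real.sin_pi_div_two_sub]
    exact Real.sin_le_sin_of_le_of_le_pi_div_two (by linarith) (by linarith) (by linarith)
  have hc0 : 0 ≤ c := le_trans hs0 hsc
  set f : ℕ → ℝ := fun x => (wR δ x)^2 with hfdef
  have hw0 : ∀ y, 0 ≤ wR δ y := by
    intro y; rw [wR]; split
    · exact hs0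
    · exact hc0
  have hwge : ∀ y, s ≤ wR δ y := by
    intro y; rw [wR]; split
    · exact le_refl _
    · exact hsc
  have hwle : ∀ y, wR δ y ≤ c := by
    intro y; rw [wR]; split
    · exact hsc
    · exact le_refl _
  have hf0 : ∀ y, 0 ≤ f y := fun y => sq_nonneg _
  have hfC : ∀ x, f x ≤ c^2 := fun x => pow_le_pow_left₀ (hw0 x) (hwle x) 2
  have hfmin : ∀ x, Odd x → ∀ y, f x ≤ f y := by
    intro x hx y
    have : wR δ x = s := by rw [wR, if_pos hx]
    show (wR δ x)^2 ≤ (wR δ y)^2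
    rw [this]
    exact pow_le_pow_left₀ hs0 (hwge y) 2
  -- set computations
  have e1 : (Finset.Icc 1 L).erase 1 = Finset.Icc 2 L := by
    ext x; simp only [Finset.mem_erase, Finset.mem_Icc]; omega
  have e2 : (Finset.Icc 2 L).erase L = Finset.Icc 2 (L-1) := by
    ext x; simp only [Finset.mem_erase, Finset.mem_Icc]; omega
  have c1 : (Finset.Icc 1 L).card = L := by rw [Nat.card_Icc]; omega
  have c2 : (Finset.Icc 2 L).card = L - 1 := by rw [Nat.card_Icc]; omega
  have m1 : (1 : ℕ) ∈ Finset.Icc 1 L := by simp only [Finset.mem_Icc]; omega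
  have m2 : L ∈ Finset.Icc 2 L := by simp only [Finset.mem_Icc]; omega
  -- the three inequalities
  have h1 := step1 (Finset.Icc 1 L) Ne hNe1 f hf0 (c^2) (sq_nonneg c) (fun x _ => hfC x)
  have h2 := step2 (Finset.Icc 1 L) 1 m1 f hf0 (fun y _ => hfmin 1 odd_one y) (Ne - 1)
  have h3 := step2 (Finset.Icc 2 L) L m2 f hf0 (fun y _ => hfmin L hLodd y) (Ne - 1)
  rw [c1] at h1 h2
  rw [e1] at h2
  rw [c2, e2] at h3
  -- abbreviations
  set A1 := ∑ A ∈ (Finset.Icc 1 L).powersetCard Ne, ∏ x ∈ A, f x with hA1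
  set A2 := ∑ A ∈ (Finset.Icc 1 L).powersetCard (Ne-1), ∏ x ∈ A, f x with hA2
  set A3 := ∑ A ∈ (Finset.Icc 2 L).powersetCard (Ne-1), ∏ x ∈ A, f x with hA3
  set A4 := ∑ A ∈ (Finset.Icc 2 (L-1)).powersetCard (Ne-1), ∏ x ∈ A, f x with hA4
  have hA30 : 0 ≤ A3 := Finset.sum_nonneg fun A _ =>
    Finset.prod_nonneg fun x _ => hf0 x
  have hA40 : 0 ≤ A4 := Finset.sum_nonneg fun A _ =>
    Finset.prod_nonneg fun x _ => hf0 x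
  set x : ℝ := ((L - Ne : ℕ) : ℝ) with hxdef
  set y : ℝ := ((L - 1 : ℕ) : ℝ) with hydef
  have hx0 : (1:ℝ) ≤ x := by
    rw [hxdef]
    have h : 1 ≤ L - Ne := by omega
    exact_mod_cast h
  have hcast1 : ((L - (Ne - 1) : ℕ) : ℝ) = x + 1 := by
    rw [hxdef, show L - (Ne - 1) = (L - Ne) + 1 from by omega]; push_cast; ring
  have hcast2 : ((L - 1 - (Ne - 1) : ℕ) : ℝ) = x := by
    rw [hxdef, show L - 1 - (Ne - 1) = L - Ne from by omega]
  rw [hcast1] at h1 h2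
  rw [hcast2] at h3
  -- combine
  have hA : (Ne : ℝ) * A1 ≤ c^2 * ((L:ℝ) * A3) := by
    calc (Ne : ℝ) * A1 ≤ c^2 * (x+1) * A2 := h1
      _ = c^2 * ((x+1) * A2) := by ring
      _ ≤ c^2 * ((L:ℝ) * A3) := mul_le_mul_of_nonneg_left h2 (sq_nonneg c)
  have hcomb : x * ((Ne:ℝ) * A1) ≤ c^2 * (L:ℝ) * (y * A4) := by
    calc x * ((Ne:ℝ) * A1) ≤ x * (c^2 * ((L:ℝ) * A3)) :=
          mul_le_mul_of_nonneg_left hA (by linarith)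
      _ = (c^2 * (L:ℝ)) * (x * A3) := by ring
      _ ≤ (c^2 * (L:ℝ)) * (y * A4) := by
          refine mul_le_mul_of_nonneg_left h3 ?_
          positivity
  -- final rearrangement
  have hLx : (L : ℝ) - (Ne : ℝ) = x := by
    rw [hxdef, Nat.cast_sub (by omega : Ne ≤ L)]
  have hLy : (L : ℝ) - 1 = y := by
    rw [hydef, Nat.cast_sub (by omega : 1 ≤ L)]; simp
  have hgoal : A1 ≤ ((L:ℝ) * y / ((Ne:ℝ) * x)) * c^2 * A4 := by
    rw [div_mul_eq_mul_div, div_mul_eq_mul_div, le_div_iff₀ (by positivity)]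
    calc A1 * ((Ne:ℝ) * x) = x * ((Ne:ℝ) * A1) := by ring
      _ ≤ c^2 * (L:ℝ) * (y * A4) := hcomb
      _ = (L:ℝ) * y * c^2 * A4 := by ring
  show A1 ≤ ((L:ℝ) * ((L:ℝ) - 1) / ((Ne:ℝ) * ((L:ℝ) - (Ne:ℝ)))) * c^2 * A4
  rw [hLx, hLy]
  exact hgoal

end
end
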